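/- (Heisenberg–Weyl twirl of a product map.) Let p be an odd prime and let A, B, M be p×p complex matrices. Then (1/p²) ∑_{a,b ∈ ℤ/pℤ} (X^aZ^b)† A (X^aZ^b) · M · (X^aZ^b)† B (X^aZ^b) = ∑_{a,b ∈ ℤ/pℤ} r(a,b) · (X^aZ^b) M (X^aZ^b)†, where r(a,b) = Tr((X^aZ^b)† A) · Tr((X^aZ^b) B) / p². In particular r(0,0) = Tr(A)Tr(B)/p² and ∑_{a,b} r(a,b) = Tr(AB)/p. -/

import Mathlib

open scoped Matrix BigOperators

/-- The Heisenberg–Weyl shift matrix `X` on `ℂ^p`: `X|k⟩ = |k+1⟩`. -/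
def HWX (p : ℕ) : Matrix (ZMod p) (ZMod p) ℂ :=
  Matrix.of fun x y => if x = y + 1 then 1 else 0

/-- The Heisenberg–Weyl clock matrix `Z` on `ℂ^p`: `Z|k⟩ = ω^k |k⟩` with
`ω = exp(2πi/p)`. -/
noncomputable def HWZ (p : ℕ) [NeZero p] : Matrix (ZMod p) (ZMod p) ℂ :=
  Matrix.diagonal fun k => Complex.exp (2 * Real.pi * Complex.I / p) ^ (k : ZMod p).val

/-- The Heisenberg–Weyl unitary `W(a,b) = X^a Z^b` for `a, b ∈ ℤ/p`. -/
noncomputable def HWW (p : ℕ) [NeZero p] (a b : ZMod p) : Matrix (ZMod p) (ZMod p) ℂ :=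
  HWX p ^ a.val * HWZ p ^ b.val

/-- The twirl coefficient `r(a,b) = Tr((X^aZ^b)† A) · Tr((X^aZ^b) B) / p²`. -/
noncomputable def hwCoeff (p : ℕ) [NeZero p] (A B : Matrix (ZMod p) (ZMod p) ℂ)
    (a b : ZMod p) : ℂ :=
  ((HWW p a b)ᴴ * A).trace * ((HWW p a b) * B).trace / (p : ℂ) ^ 2

/-! With `ψ = ZMod.stdAddChar`, every entry of `W(a,b)ᴴ C W(a,b)` is the entry of `C` shifted by
`a` times the phase `ψ(b(y - x))`, and `r(a,b)` is a double sum of shifted entries of `A` and `B`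
with phases linear in `b`. Summing over `b`, the orthogonality `∑_b ψ(b t) = p·[t = 0]` collapses
one summation on each side, and after a change of variables both sides of the twirl identity have
`(x, y)` entry `(1/p) ∑_{a,s} A(s+a, s) B(s-x+y, s-x+y+a) M(x-a, y-a)`. Replacing the phase
`ψ(b(x - y))` of the right-hand side by `1` gives `∑ r(a,b) = Tr(AB)/p`. -/

open ZMod (stdAddChar)

section Weyl

variable {p : ℕ} [NeZero p]

lemma HWX_pow_apply (n : ℕ) (x y : ZMod p) :
    (HWX p ^ n) x y = if x = y + n then 1 else 0 := by
  induction n generalizing y with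
  | zero => simp [Matrix.one_apply]
  | succ n ih =>
    rw [pow_succ, Matrix.mul_apply, Finset.sum_eq_single (y + 1)]
    · rw [ih]
      simp [HWX, add_assoc, add_comm (1 : ZMod p)]
    · intro k _ hk
      simp [HWX, hk]
    · simp

lemma exp_two_pi_I_div_pow_eq_stdAddChar (n : ℕ) :
    Complex.exp (2 * Real.pi * Complex.I / p) ^ n = stdAddChar (n : ZMod p) := by
  rw [ZMod.stdAddChar_apply, ZMod.toCircle_natCast, ← Complex.exp_nat_mul]
  ring_nf

lemma HWZ_pow (n : ℕ) : HWZ p ^ n = Matrix.diagonal fun k => stdAddChar ((n : ZMod p) * k) := by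
  simp [HWZ, Matrix.diagonal_pow, exp_two_pi_I_div_pow_eq_stdAddChar, ← AddChar.map_nsmul_eq_pow]

lemma HWW_apply (a b x y : ZMod p) :
    HWW p a b x y = if x = y + a then stdAddChar (b * y) else 0 := by
  simp [HWW, HWZ_pow, HWX_pow_apply]

lemma star_stdAddChar (j : ZMod p) : star (stdAddChar j) = stdAddChar (-j) :=
  AddChar.starComp_apply (by simp [ZMod.ringChar_zmod_n, Nat.pos_of_neZero]) j

lemma conjTranspose_HWW_apply (a b x y : ZMod p) :
    (HWW p a b)ᴴ x y = if y = x + a then stdAddChar (-(b * x)) else 0 := by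
  rw [Matrix.conjTranspose_apply, HWW_apply, apply_ite star, star_zero, star_stdAddChar]

lemma conjTranspose_HWW_mul_mul_HWW_apply (a b : ZMod p) (C : Matrix (ZMod p) (ZMod p) ℂ)
    (x y : ZMod p) :
    ((HWW p a b)ᴴ * C * HWW p a b) x y = stdAddChar (b * (y - x)) * C (x + a) (y + a) := by
  simp only [Matrix.mul_apply, HWW_apply, conjTranspose_HWW_apply, ite_mul, mul_ite, zero_mul,
    mul_zero, Finset.sum_ite_eq', Finset.mem_univ, if_true]
  rw [mul_sub, sub_eq_neg_add, AddChar.map_add_eq_mul]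
  ring

lemma HWW_mul_mul_conjTranspose_HWW_apply (a b : ZMod p) (C : Matrix (ZMod p) (ZMod p) ℂ)
    (x y : ZMod p) :
    (HWW p a b * C * (HWW p a b)ᴴ) x y = stdAddChar (b * (x - y)) * C (x - a) (y - a) := by
  simp only [Matrix.mul_apply, HWW_apply, conjTranspose_HWW_apply, ite_mul, mul_ite, zero_mul,
    mul_zero, ← sub_eq_iff_eq_add, eq_comm (a := x - a), eq_comm (a := y - a), Finset.sum_ite_eq',
    Finset.mem_univ, if_true]
  rw [show b * (x - y) = b * (x - a) + -(b * (y - a)) by ring, AddChar.map_add_eq_mul]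
  ring

lemma trace_conjTranspose_HWW_mul (a b : ZMod p) (A : Matrix (ZMod p) (ZMod p) ℂ) :
    ((HWW p a b)ᴴ * A).trace = ∑ s, stdAddChar (-(b * s)) * A (s + a) s := by
  simp only [Matrix.trace, Matrix.diag, Matrix.mul_apply, conjTranspose_HWW_apply, ite_mul,
    zero_mul, Finset.sum_ite_eq', Finset.mem_univ, if_true]

lemma trace_HWW_mul (a b : ZMod p) (B : Matrix (ZMod p) (ZMod p) ℂ) :
    (HWW p a b * B).trace = ∑ t, stdAddChar (b * t) * B t (t + a) := by
  rw [Matrix.trace_mul_comm]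
  simp only [Matrix.trace, Matrix.diag, Matrix.mul_apply, HWW_apply, mul_ite, mul_zero,
    Finset.sum_ite_eq', Finset.mem_univ, if_true, mul_comm]

lemma sum_stdAddChar_mul (t : ZMod p) :
    ∑ b, stdAddChar (b * t) = if t = 0 then (p : ℂ) else 0 := by
  simpa using AddChar.sum_mulShift t (ZMod.isPrimitive_stdAddChar p)

lemma sum_sum_stdAddChar_mul_sub_mul (c : ZMod p) (f : ZMod p → ℂ) :
    ∑ b, ∑ t, stdAddChar (b * (t - c)) * f t = p * f c := by
  rw [Finset.sum_comm]
  simp [← Finset.sum_mul, sum_stdAddChar_mul, sub_eq_zero]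

end Weyl

section Coefficients

variable {p : ℕ} [NeZero p] (A B : Matrix (ZMod p) (ZMod p) ℂ)

lemma sum_hwCoeff_mul_stdAddChar (a c : ZMod p) :
    ∑ b, hwCoeff p A B a b * stdAddChar (b * c)
      = (∑ s, A (s + a) s * B (s - c) (s - c + a)) / p := by
  have h (b : ZMod p) : hwCoeff p A B a b * stdAddChar (b * c)
      = (∑ s, ∑ t, stdAddChar (b * (t - (s - c))) * (A (s + a) s * B t (t + a))) / p ^ 2 := by
    rw [hwCoeff, trace_conjTranspose_HWW_mul, trace_HWW_mul, Finset.sum_mul_sum,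
      div_mul_eq_mul_div, Finset.sum_mul]
    congr 1
    refine Finset.sum_congr rfl fun s _ => ?_
    rw [Finset.sum_mul]
    refine Finset.sum_congr rfl fun t _ => ?_
    rw [show b * (t - (s - c)) = -(b * s) + b * t + b * c by ring, AddChar.map_add_eq_mul,
      AddChar.map_add_eq_mul]
    ring
  have hp : (p : ℂ) ≠ 0 := Nat.cast_ne_zero.mpr (NeZero.ne p)
  rw [Finset.sum_congr rfl fun b _ => h b, ← Finset.sum_div, Finset.sum_comm]
  simp only [sum_sum_stdAddChar_mul_sub_mul, ← Finset.mul_sum]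
  field_simp

lemma hwCoeff_zero_zero : hwCoeff p A B 0 0 = A.trace * B.trace / (p : ℂ) ^ 2 := by
  simp [hwCoeff, HWW]

lemma sum_sum_hwCoeff : ∑ a, ∑ b, hwCoeff p A B a b = (A * B).trace / p := by
  have h (a : ZMod p) : ∑ b, hwCoeff p A B a b = (∑ s, A (s + a) s * B s (s + a)) / p := by
    simpa using sum_hwCoeff_mul_stdAddChar A B a 0
  simp only [h, ← Finset.sum_div, Matrix.trace, Matrix.diag, Matrix.mul_apply]
  rw [Finset.sum_comm, Finset.sum_comm (f := fun x k => A x k * B k x)]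
  congr 1
  exact Finset.sum_congr rfl fun s _ => Fintype.sum_equiv (Equiv.addLeft s) _ _ fun _ => rfl

end Coefficients

section Twirl

variable {p : ℕ} [NeZero p] (A B M : Matrix (ZMod p) (ZMod p) ℂ)

lemma sum_twirl_product_apply (a x y : ZMod p) :
    ∑ b, ((HWW p a b)ᴴ * A * HWW p a b * M * ((HWW p a b)ᴴ * B * HWW p a b)) x y
      = p * ∑ v, A (x + a) (x - y + v + a) * M (x - y + v) v * B (v + a) (y + a) := by
  have h (b : ZMod p) :
      ((HWW p a b)ᴴ * A * HWW p a b * M * ((HWW p a b)ᴴ * B * HWW p a b)) x y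
        = ∑ v, ∑ u, stdAddChar (b * (u - (x - y + v))) *
            (A (x + a) (u + a) * M u v * B (v + a) (y + a)) := by
    simp only [Matrix.mul_apply (M := _ * M), Matrix.mul_apply (N := M),
      conjTranspose_HWW_mul_mul_HWW_apply, Finset.sum_mul]
    refine Finset.sum_congr rfl fun v _ => Finset.sum_congr rfl fun u _ => ?_
    rw [show b * (u - (x - y + v)) = b * (u - x) + b * (y - v) by ring, AddChar.map_add_eq_mul]
    ring
  simp only [h]
  rw [Finset.sum_comm, Finset.mul_sum]
  exact Finset.sum_congr rfl fun v _ => sum_sum_stdAddChar_mul_sub_mul _ _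

lemma twirl_product_apply (x y : ZMod p) :
    ((1 / (p : ℂ) ^ 2) • ∑ a, ∑ b,
        (HWW p a b)ᴴ * A * HWW p a b * M * ((HWW p a b)ᴴ * B * HWW p a b)) x y
      = (∑ a, ∑ s, A (s + a) s * B (s - (x - y)) (s - (x - y) + a) * M (x - a) (y - a)) / p := by
  have hp : (p : ℂ) ≠ 0 := Nat.cast_ne_zero.mpr (NeZero.ne p)
  have hreindex : ∑ a, ∑ v, A (x + a) (x - y + v + a) * M (x - y + v) v * B (v + a) (y + a)
      = ∑ a, ∑ s, A (s + a) s * B (s - (x - y)) (s - (x - y) + a) * M (x - a) (y - a) := by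
    rw [Finset.sum_comm, ← Fintype.sum_equiv (Equiv.subLeft y) _ _ fun _ => rfl]
    refine Finset.sum_congr rfl fun a _ => ?_
    rw [← Fintype.sum_equiv (Equiv.addRight (a - x)) _ _ fun _ => rfl]
    refine Finset.sum_congr rfl fun s _ => ?_
    simp only [Equiv.coe_addRight, Equiv.subLeft_apply]
    ring_nf
  simp only [Matrix.smul_apply, Matrix.sum_apply, smul_eq_mul, sum_twirl_product_apply,
    ← Finset.mul_sum, hreindex]
  field_simp

lemma sum_sum_hwCoeff_smul_apply (x y : ZMod p) :
    (∑ a, ∑ b, hwCoeff p A B a b • (HWW p a b * M * (HWW p a b)ᴴ)) x y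
      = (∑ a, ∑ s, A (s + a) s * B (s - (x - y)) (s - (x - y) + a) * M (x - a) (y - a)) / p := by
  simp only [Matrix.sum_apply, Matrix.smul_apply, smul_eq_mul,
    HWW_mul_mul_conjTranspose_HWW_apply, ← mul_assoc, ← Finset.sum_mul, sum_hwCoeff_mul_stdAddChar]
  simp only [Finset.sum_div, Finset.sum_mul, div_mul_eq_mul_div]

end Twirl

theorem hw_twirl_product_map_general (p : ℕ) [Fact p.Prime]
    (A B M : Matrix (ZMod p) (ZMod p) ℂ) :
    ((1 : ℂ) / (p : ℂ) ^ 2) •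
        ∑ a : ZMod p, ∑ b : ZMod p,
          ((HWW p a b)ᴴ * A * HWW p a b) * M * ((HWW p a b)ᴴ * B * HWW p a b) =
      ∑ a : ZMod p, ∑ b : ZMod p, hwCoeff p A B a b • (HWW p a b * M * (HWW p a b)ᴴ) ∧
    hwCoeff p A B 0 0 = A.trace * B.trace / (p : ℂ) ^ 2 ∧
    ∑ a : ZMod p, ∑ b : ZMod p, hwCoeff p A B a b = (A * B).trace / (p : ℂ) := by
  refine ⟨?_, hwCoeff_zero_zero A B, sum_sum_hwCoeff A B⟩
  ext x y
  rw [twirl_product_apply, sum_sum_hwCoeff_smul_apply]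

/-- Heisenberg–Weyl twirl of a product map. -/
theorem hw_twirl_product_map (p : ℕ) [Fact p.Prime] (hodd : Odd p)
    (A B M : Matrix (ZMod p) (ZMod p) ℂ) :
    ((1 : ℂ) / (p : ℂ) ^ 2) •
        ∑ a : ZMod p, ∑ b : ZMod p,
          ((HWW p a b)ᴴ * A * HWW p a b) * M * ((HWW p a b)ᴴ * B * HWW p a b) =
      ∑ a : ZMod p, ∑ b : ZMod p, hwCoeff p A B a b • (HWW p a b * M * (HWW p a b)ᴴ) ∧
    hwCoeff p A B 0 0 = A.trace * B.trace / (p : ℂ) ^ 2 ∧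
    ∑ a : ZMod p, ∑ b : ZMod p, hwCoeff p A B a b = (A * B).trace / (p : ℂ) :=
  hw_twirl_product_map_general p A B M
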